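/- arXiv:1705.00898 — 3 statements merged into one kernel-verified Lean document; each statement's English description precedes it below -/
import Mathlib

section
/- Let (Ω,σ,ℝ⁺) be a continuous global semiflow on a compact metric space such that every point admits at least one backward extension. Define Ω* = {ξ ∈ C(ℝ,Ω) | σ(t, ξ(s)) = ξ(t+s) for all t ≥ 0 and s ∈ ℝ} with the compact-open topology. Then Ω* is a compact metric space, and the map σ* : ℝ × Ω* → Ω*, (t,ξ) ↦ ξ·t where (ξ·t)(s) = ξ(t+s), defines a continuous flow on Ω*. -/
open Filter Topology

/-!
An entire orbit satisfies `ξ b = σ (b - a) (ξ a)` for `a ≤ b`, so near any time `x` every entire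
orbit is a trajectory `u ↦ σ (u - (x - 1)) ω` of the semiflow. Continuity of `σ` on
`[0, ∞) × Ω` with `Ω` compact makes these trajectories equicontinuous in `ω`, and the entire
orbits form a closed, hence compact, subset of `ℝ → Ω`. Arzelà–Ascoli then gives compactness in
the compact-open topology; the shift is continuous because evaluation `C(ℝ, Ω) × ℝ → Ω` is.
-/

def IsEntireOrbit {Ω : Type*} (σ : ℝ → Ω → Ω) (ξ : ℝ → Ω) : Prop :=
  ∀ t : ℝ, 0 ≤ t → ∀ s : ℝ, σ t (ξ s) = ξ (t + s)

namespace IsEntireOrbit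

variable {Ω : Type*} {σ : ℝ → Ω → Ω} {ξ : ℝ → Ω}

theorem apply_eq_of_le (hξ : IsEntireOrbit σ ξ) {a b : ℝ} (hab : a ≤ b) :
    ξ b = σ (b - a) (ξ a) := by
  rw [hξ (b - a) (sub_nonneg.2 hab) a, sub_add_cancel]

theorem comp_add_left (hξ : IsEntireOrbit σ ξ) (r : ℝ) : IsEntireOrbit σ (fun s => ξ (r + s)) :=
  fun t ht s => by rw [hξ t ht, add_left_comm]

variable [TopologicalSpace Ω]

theorem continuous (hσ : ContinuousOn (fun p : ℝ × Ω => σ p.1 p.2) (Set.Ici 0 ×ˢ Set.univ))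
    (hξ : IsEntireOrbit σ ξ) : Continuous ξ := by
  refine continuous_iff_continuousAt.2 fun x => ?_
  have htraj : ContinuousAt (fun u => σ (u - (x - 1)) (ξ (x - 1))) x := by
    refine ContinuousAt.comp (f := fun u => (u - (x - 1), ξ (x - 1)))
      (hσ.continuousAt (prod_mem_nhds (Ici_mem_nhds (by linarith)) univ_mem)) (by fun_prop)
  refine htraj.congr ?_
  filter_upwards [Ioi_mem_nhds (show x - 1 < x by linarith)] with u hu
  exact (hξ.apply_eq_of_le hu.le).symm

end IsEntireOrbit

section Compactness

variable {Ω : Type*} {σ : ℝ → Ω → Ω}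

theorem isClosed_setOf_isEntireOrbit [TopologicalSpace Ω] [T2Space Ω]
    (hσ : ∀ t, 0 ≤ t → Continuous (σ t)) : IsClosed {ξ : ℝ → Ω | IsEntireOrbit σ ξ} := by
  simp only [IsEntireOrbit, Set.ofPred_forall]
  exact isClosed_iInter fun t => isClosed_iInter fun ht => isClosed_iInter fun s =>
    isClosed_eq ((hσ t ht).comp (continuous_apply s)) (continuous_apply (t + s))

theorem equicontinuous_isEntireOrbit [UniformSpace Ω] [CompactSpace Ω]
    (hσ : ContinuousOn (fun p : ℝ × Ω => σ p.1 p.2) (Set.Ici 0 ×ˢ Set.univ)) :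
    Equicontinuous ((↑) : {ξ : ℝ → Ω // IsEntireOrbit σ ξ} → ℝ → Ω) := by
  intro x U hU
  have hunif : TendstoUniformly (fun u ω => σ (u - (x - 1)) ω) (σ 1) (𝓝 x) := by
    have hcont : ContinuousOn (fun p : ℝ × Ω => σ (p.1 - (x - 1)) p.2)
        (Set.Ioi (x - 1) ×ˢ Set.univ) :=
      hσ.comp (f := fun p : ℝ × Ω => (p.1 - (x - 1), p.2)) (by fun_prop)
        fun p hp => ⟨Set.mem_Ici.2 (sub_nonneg.2 hp.1.le), trivial⟩
    simpa using ContinuousOn.tendstoUniformly (f := fun u ω => σ (u - (x - 1)) ω)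
      (Ioi_mem_nhds (show x - 1 < x by linarith)) hcont
  filter_upwards [hunif U hU, Ioi_mem_nhds (show x - 1 < x by linarith)] with u hu hux ξ
  rw [ξ.2.apply_eq_of_le (show x - 1 ≤ x by linarith), ξ.2.apply_eq_of_le hux.le]
  simpa using hu (ξ.1 (x - 1))

theorem isCompact_setOf_isEntireOrbit [UniformSpace Ω] [T2Space Ω] [CompactSpace Ω]
    (hσ : ContinuousOn (fun p : ℝ × Ω => σ p.1 p.2) (Set.Ici 0 ×ˢ Set.univ)) :
    IsCompact {ξ : C(ℝ, Ω) | IsEntireOrbit σ ξ} := by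
  have hσt : ∀ t, 0 ≤ t → Continuous (σ t) := fun t ht =>
    hσ.comp_continuous (continuous_const.prodMk continuous_id) fun _ => ⟨ht, trivial⟩
  have himage : ContinuousMap.toFun '' {ξ : C(ℝ, Ω) | IsEntireOrbit σ ξ} =
      {ξ : ℝ → Ω | IsEntireOrbit σ ξ} := by
    ext ξ
    exact ⟨fun ⟨f, hf, hfξ⟩ => hfξ ▸ hf, fun hξ => ⟨⟨ξ, hξ.continuous hσ⟩, hξ, rfl⟩⟩
  refine ArzelaAscoli.isCompact_of_equicontinuous _ ?_ ?_
  · rw [himage]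
    exact (isClosed_setOf_isEntireOrbit hσt).isCompact
  · exact (equicontinuous_isEntireOrbit hσ).comp
      fun ξ : {ξ : C(ℝ, Ω) // IsEntireOrbit σ ξ} => ⟨ξ.1, ξ.2⟩

end Compactness

theorem ContinuousMap.continuous_comp_addLeft {G X : Type*} [TopologicalSpace G] [Add G]
    [ContinuousAdd G] [LocallyCompactSpace G] [TopologicalSpace X] :
    Continuous fun p : G × C(G, X) => p.2.comp ⟨(p.1 + ·), by fun_prop⟩ :=
  continuous_of_continuous_uncurry _ <| continuous_eval.comp
    (by fun_prop : Continuous fun q : (G × C(G, X)) × G => (q.1.2, q.1.1 + q.2))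

theorem stmt3_general (Ω : Type*) [MetricSpace Ω] [CompactSpace Ω]
    (σ : ℝ → Ω → Ω)
    (hcont : ContinuousOn (fun p : ℝ × Ω => σ p.1 p.2) (Set.Ici (0:ℝ) ×ˢ Set.univ))
    (Ωstar : Set C(ℝ, Ω))
    (hΩstar : Ωstar = {ξ | ∀ t : ℝ, 0 ≤ t → ∀ s : ℝ, σ t (ξ s) = ξ (t + s)})
    -- the time-shift (lifting) flow
    (shift : ℝ → C(ℝ, Ω) → C(ℝ, Ω))
    (hshift : ∀ t ξ s, shift t ξ s = ξ (t + s)) :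
    IsCompact Ωstar ∧
    (∀ t : ℝ, ∀ ξ ∈ Ωstar, shift t ξ ∈ Ωstar) ∧
    Continuous (fun p : ℝ × C(ℝ, Ω) => shift p.1 p.2) ∧
    (∀ ξ, shift 0 ξ = ξ) ∧
    (∀ t s : ℝ, ∀ ξ, shift (t + s) ξ = shift t (shift s ξ)) := by
  have hshift_eq : (fun p : ℝ × C(ℝ, Ω) => shift p.1 p.2) =
      fun p => p.2.comp ⟨(p.1 + ·), by fun_prop⟩ := by
    funext p; ext s; exact hshift p.1 p.2 s
  subst hΩstar
  refine ⟨isCompact_setOf_isEntireOrbit hcont, fun t ξ hξ => ?_, ?_, fun ξ => ?_, fun t s ξ => ?_⟩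
  · simpa only [Set.mem_ofPred_eq, IsEntireOrbit, hshift] using
      IsEntireOrbit.comp_add_left hξ t
  · rw [hshift_eq]
    exact ContinuousMap.continuous_comp_addLeft
  · ext u; rw [hshift, zero_add]
  · ext u; rw [hshift, hshift, hshift, add_assoc, add_left_comm]

/-- Let `(Ω,σ,ℝ⁺)` be a continuous global semiflow on a compact metric
space such that every point admits at least one backward extension. Then
`Ω* = {ξ ∈ C(ℝ,Ω) | σ(t,ξ(s)) = ξ(t+s) for t ≥ 0, s ∈ ℝ}` is compact (in the
compact-open topology, which is metrizable), and the time-shift map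
`σ*(t,ξ) = ξ·t`, `(ξ·t)(s) = ξ(t+s)`, defines a continuous flow on `Ω*`. -/
theorem stmt3 (Ω : Type*) [MetricSpace Ω] [CompactSpace Ω]
    (σ : ℝ → Ω → Ω)
    (hcont : ContinuousOn (fun p : ℝ × Ω => σ p.1 p.2) (Set.Ici (0:ℝ) ×ˢ Set.univ))
    (hid : ∀ ω, σ 0 ω = ω)
    (hsemi : ∀ t s : ℝ, 0 ≤ t → 0 ≤ s → ∀ ω, σ (t + s) ω = σ t (σ s ω))
    (hback : ∀ ω : Ω, ∃ θ : ℝ → Ω, ContinuousOn θ (Set.Iic (0:ℝ)) ∧ θ 0 = ω ∧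
      ∀ t s : ℝ, 0 ≤ t → s ≤ -t → σ t (θ s) = θ (t + s))
    (Ωstar : Set C(ℝ, Ω))
    (hΩstar : Ωstar = {ξ | ∀ t : ℝ, 0 ≤ t → ∀ s : ℝ, σ t (ξ s) = ξ (t + s)})
    -- the time-shift (lifting) flow
    (shift : ℝ → C(ℝ, Ω) → C(ℝ, Ω))
    (hshift : ∀ t ξ s, shift t ξ s = ξ (t + s)) :
    IsCompact Ωstar ∧
    (∀ t : ℝ, ∀ ξ ∈ Ωstar, shift t ξ ∈ Ωstar) ∧
    Continuous (fun p : ℝ × C(ℝ, Ω) => shift p.1 p.2) ∧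
    (∀ ξ, shift 0 ξ = ξ) ∧
    (∀ t s : ℝ, ∀ ξ, shift (t + s) ξ = shift t (shift s ξ)) :=
  stmt3_general Ω σ hcont Ωstar hΩstar shift hshift
end

section
/- Let (Ω,σ,ℝ⁺) be a minimal continuous semiflow on a compact metric space such that every point admits a backward extension, and let (Ω*, σ*) be the lifting flow on the space of entire orbits. Then (Ω*, σ*) is minimal. -/
open Filter Topology

/-- Let `(Ω,σ,ℝ⁺)` be a minimal continuous semiflow on a compact metric
space in which every point admits a backward extension, and let `(Ω*,σ*)` be the
lifting flow on the space of entire orbits (with the shift). Then `(Ω*,σ*)` is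
minimal: every `σ*`-orbit is dense in `Ω*`. -/
theorem stmt4 (Ω : Type*) [MetricSpace Ω] [CompactSpace Ω]
    (σ : ℝ → Ω → Ω)
    (hcont : ContinuousOn (fun p : ℝ × Ω => σ p.1 p.2) (Set.Ici (0:ℝ) ×ˢ Set.univ))
    (hid : ∀ ω, σ 0 ω = ω)
    (hsemi : ∀ t s : ℝ, 0 ≤ t → 0 ≤ s → ∀ ω, σ (t + s) ω = σ t (σ s ω))
    (hback : ∀ ω : Ω, ∃ θ : ℝ → Ω, ContinuousOn θ (Set.Iic (0:ℝ)) ∧ θ 0 = ω ∧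
      ∀ t s : ℝ, 0 ≤ t → s ≤ -t → σ t (θ s) = θ (t + s))
    -- minimality of the semiflow: every positive semiorbit is dense
    (hmin : ∀ ω : Ω, Dense {p | ∃ t : ℝ, 0 ≤ t ∧ p = σ t ω})
    (Ωstar : Set C(ℝ, Ω))
    (hΩstar : Ωstar = {ξ | ∀ t : ℝ, 0 ≤ t → ∀ s : ℝ, σ t (ξ s) = ξ (t + s)})
    (shift : ℝ → C(ℝ, Ω) → C(ℝ, Ω))
    (hshift : ∀ t ξ s, shift t ξ s = ξ (t + s)) :
    ∀ ξ ∈ Ωstar, Ωstar ⊆ closure {η | ∃ t : ℝ, η = shift t ξ} := by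
  intro ξ hξ η hη
  rw [hΩstar] at hξ hη
  -- closure membership via compact convergence basis
  rw [mem_closure_iff_nhds_basis
    (nhds_basis_uniformity' ContinuousMap.hasBasis_compactConvergenceUniformity)]
  rintro ⟨K, V⟩ ⟨hK, hV⟩
  obtain ⟨ε, hε, hεV⟩ := Metric.mem_uniformity_dist.mp hV
  -- find T > 0 with K ⊆ [-T, T]
  obtain ⟨r, hr⟩ := hK.isBounded.subset_closedBall 0
  set T : ℝ := max r 1 with hT
  have hT1 : (0:ℝ) < T := lt_of_lt_of_le one_pos (le_max_right _ _)
  have hKT : K ⊆ Set.Icc (-T) T := by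
    intro x hx
    have := hr hx
    rw [Real.closedBall_eq_Icc] at this
    constructor
    · calc -T ≤ -r := by simp [hT]
        _ ≤ x := by simpa using this.1
    · exact le_trans (by simpa using this.2) (le_max_left _ _)
  -- uniform continuity of σ on [0, 2T] × Ω
  have hScomp : IsCompact (Set.Icc (0:ℝ) (2*T) ×ˢ (Set.univ : Set Ω)) :=
    (isCompact_Icc).prod isCompact_univ
  have hsub : Set.Icc (0:ℝ) (2*T) ×ˢ (Set.univ : Set Ω) ⊆ Set.Ici (0:ℝ) ×ˢ Set.univ := by
    rintro ⟨a, b⟩ ⟨ha, -⟩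
    exact ⟨ha.1, Set.mem_univ _⟩
  have huc : UniformContinuousOn (fun p : ℝ × Ω => σ p.1 p.2)
      (Set.Icc (0:ℝ) (2*T) ×ˢ Set.univ) :=
    hScomp.uniformContinuousOn_of_continuous (hcont.mono hsub)
  obtain ⟨δ, hδ, hδε⟩ := (Metric.uniformContinuousOn_iff).mp huc ε hε
  -- use minimality at ξ(-T) to approach η(-T)
  obtain ⟨p, hpb, u, hu, hpu⟩ := Metric.dense_iff.mp (hmin (ξ (-T))) (η (-T)) δ hδ
  rw [hpu] at hpb
  have hξu : σ u (ξ (-T)) = ξ (u + -T) := hξ u hu (-T)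
  refine ⟨shift u ξ, ⟨u, rfl⟩, ?_⟩
  intro s hs
  obtain ⟨hs1, hs2⟩ := hKT hs
  have hsT : 0 ≤ s + T := by linarith
  have h1 : σ (s + T) (ξ (u + -T)) = ξ (u + s) := by
    rw [hξ (s + T) hsT (u + -T)]; ring_nf
  have h2 : σ (s + T) (η (-T)) = η s := by
    rw [hη (s + T) hsT (-T)]; ring_nf
  have hmem1 : ((s + T, ξ (u + -T)) : ℝ × Ω) ∈ Set.Icc (0:ℝ) (2*T) ×ˢ (Set.univ : Set Ω) :=
    ⟨⟨hsT, by show s + T ≤ 2*T; linarith⟩, Set.mem_univ _⟩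
  have hmem2 : ((s + T, η (-T)) : ℝ × Ω) ∈ Set.Icc (0:ℝ) (2*T) ×ˢ (Set.univ : Set Ω) :=
    ⟨⟨hsT, by show s + T ≤ 2*T; linarith⟩, Set.mem_univ _⟩
  have hdist : dist ((s + T, ξ (u + -T)) : ℝ × Ω) ((s + T, η (-T)) : ℝ × Ω) < δ := by
    rw [Prod.dist_eq]
    simp only [dist_self]
    rw [← hξu]
    rw [Metric.mem_ball] at hpb
    simpa [max_lt_iff, hδ] using hpb
  have := hδε _ hmem1 _ hmem2 hdist
  simp only at this
  rw [h1, h2] at this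
  apply hεV
  rw [hshift]
  rw [dist_comm] at this
  exact this
end

section
/- Under the hypotheses of the previous statement, if T ≥ 2r then the linear operator π̂_L(T,ω,x̄) : C → W^{1,∞} is compact; consequently, for T ≥ 2r the operator π_L(T,ω,x̄) : W^{1,∞} → W^{1,∞} is also compact. -/
open Set Filter Topology
open scoped NNReal ENNReal

noncomputable section

/-- Euclidean state space ℝⁿ. -/
abbrev Evec (n : ℕ) := EuclideanSpace ℝ (Fin n)

/-- The phase space `C = C([-r,0],ℝⁿ)` with the supremum norm. -/
abbrev Seg (n : ℕ) (r : ℝ) := C(Set.Icc (-r) (0:ℝ), Evec n)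

/-- Evaluation of a segment at a real time, clamped to `[-r,0]`. -/
def clamp (n : ℕ) (r : ℝ) (hr : 0 < r) (x : Seg n r) (s : ℝ) : Evec n :=
  x ⟨max (-r) (min s 0), ⟨le_max_left _ _, max_le (by linarith) (min_le_right _ _)⟩⟩

/-- A segment belongs to `W^{1,∞}` iff it is Lipschitz continuous. -/
def IsLip (n : ℕ) (r : ℝ) (f : Seg n r) : Prop := ∃ K : ℝ≥0, LipschitzWith K ⇑f

/-- Best Lipschitz constant (equals the essential supremum of the derivative). -/
def lipC (n : ℕ) (r : ℝ) (f : Seg n r) : ℝ :=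
  sInf {K : ℝ | 0 ≤ K ∧ LipschitzWith K.toNNReal ⇑f}

/-- The `W^{1,∞}` norm: maximum of the sup norm and the Lipschitz constant. -/
def Wnorm (n : ℕ) (r : ℝ) (f : Seg n r) : ℝ := max ‖f‖ (lipC n r f)

/-- Convergence of a sequence in `Ω × W^{1,∞}`. -/
def WTendsto (n : ℕ) (r : ℝ) {Ω : Type*} [MetricSpace Ω]
    (f : ℕ → Ω × Seg n r) (p : Ω × Seg n r) : Prop :=
  Tendsto (fun k => dist (f k).1 p.1 + Wnorm n r ((f k).2 - p.2)) atTop (nhds 0)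

/-- (Sequential) compactness of a subset of `Ω × W^{1,∞}`. -/
def WCompact (n : ℕ) (r : ℝ) {Ω : Type*} [MetricSpace Ω] (S : Set (Ω × Seg n r)) : Prop :=
  ∀ f : ℕ → Ω × Seg n r, (∀ k, f k ∈ S) →
    ∃ φ : ℕ → ℕ, StrictMono φ ∧ ∃ p ∈ S, WTendsto n r (fun k => f (φ k)) p

/-- Closure of a subset of `Ω × W^{1,∞}` in the `W^{1,∞}` topology. -/
def Wclosure (n : ℕ) (r : ℝ) {Ω : Type*} [MetricSpace Ω] (S : Set (Ω × Seg n r)) :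
    Set (Ω × Seg n r) :=
  {p | ∃ f : ℕ → Ω × Seg n r, (∀ k, f k ∈ S) ∧ WTendsto n r f p}

/-- Positive `Π`-invariance of a set: semiorbits of its points are globally defined
and remain in the set. -/
def PosInv (n : ℕ) (r : ℝ) {Ω : Type*} [MetricSpace Ω] (σ : ℝ → Ω → Ω)
    (u : ℝ → Ω → Seg n r → Seg n r) (β : Ω → Seg n r → ℝ≥0∞)
    (K : Set (Ω × Seg n r)) : Prop :=
  ∀ p ∈ K, β p.1 p.2 = ⊤ ∧ ∀ t : ℝ, 0 ≤ t → (σ t p.1, u t p.1 p.2) ∈ K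

/-- A point `(ω,x)` of `K` admits a backward extension in `K`. -/
def HasBack (n : ℕ) (r : ℝ) {Ω : Type*} [MetricSpace Ω] (σ : ℝ → Ω → Ω)
    (u : ℝ → Ω → Seg n r → Seg n r) (K : Set (Ω × Seg n r)) (p : Ω × Seg n r) : Prop :=
  ∃ θ : ℝ → Seg n r, θ 0 = p.2 ∧ (∀ s : ℝ, s ≤ 0 → (σ s p.1, θ s) ∈ K) ∧
    (∀ s : ℝ, s ≤ 0 → ∀ ε > (0:ℝ), ∃ δ > (0:ℝ), ∀ s' : ℝ, s' ≤ 0 → |s' - s| < δ →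
      Wnorm n r (θ s' - θ s) < ε) ∧
    (∀ t s : ℝ, 0 ≤ t → s ≤ -t → u t (σ s p.1) (θ s) = θ (t + s))

/-- Operator "norm" of a linear map from `C` to `W^{1,∞}`. -/
def opCW (n : ℕ) (r : ℝ) (f : Seg n r →L[ℝ] Seg n r) : ℝ :=
  sInf {M : ℝ | 0 ≤ M ∧ ∀ v, Wnorm n r (f v) ≤ M * ‖v‖}

/-- Operator "norm" of a linear map from `W^{1,∞}` to `W^{1,∞}`. -/
def opWW (n : ℕ) (r : ℝ) (f : Seg n r →L[ℝ] Seg n r) : ℝ :=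
  sInf {M : ℝ | 0 ≤ M ∧ ∀ v, IsLip n r v → Wnorm n r (f v) ≤ M * Wnorm n r v}

/-- Upper Lyapunov exponent of a point for the linearized semiflow `P` on `W^{1,∞}`. -/
def lypW (n : ℕ) (r : ℝ) {Ω : Type*} [MetricSpace Ω]
    (P : ℝ → Ω × Seg n r → (Seg n r →L[ℝ] Seg n r)) (p : Ω × Seg n r) : ℝ :=
  limsup (fun t : ℝ => Real.log (opWW n r (P t p)) / t) atTop

/-- Upper Lyapunov exponent of a set `S` for the linearized semiflow `P`. -/
def lamOf (n : ℕ) (r : ℝ) {Ω : Type*} [MetricSpace Ω]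
    (P : ℝ → Ω × Seg n r → (Seg n r →L[ℝ] Seg n r)) (S : Set (Ω × Seg n r)) : ℝ :=
  sSup {l : ℝ | ∃ p ∈ S, l = lypW n r P p}


/-!
Along the semiorbit of `(ω, x̄)`, which stays in the compact set `K`, the coefficients of the
variational equation `ż(t) = L(t) z_t` are bounded by a constant `C`: in the term
`D2τ(φ) · ẋ(-τ)` the derivative `ẋ` is bounded by a uniform Lipschitz constant of `K`, because
`D2τ` vanishes wherever `τ` touches `0` or `r`. The method of steps then bounds the solutions on
`[-r, T]` by a multiple of `‖v‖`, hence they are uniformly Lipschitz on `[0, T]` and Arzelà–Ascoli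
yields a uniformly convergent subsequence. Since the derivative on `[T - r, T]` is `L(t) z_t`, and
these segments only involve `z` on `[T - 2r, T] ⊆ [0, T]`, the segments at time `T` converge in
the Lipschitz seminorm as well, i.e. in `W^{1,∞}`.
-/

section LipschitzSeminorm

variable {n : ℕ} {r : ℝ}

lemma lipC_nonneg (f : Seg n r) : 0 ≤ lipC n r f :=
  Real.sInf_nonneg fun _ hc => hc.1

lemma lipC_le {f : Seg n r} {c : ℝ} (hc : 0 ≤ c) (hf : LipschitzWith c.toNNReal f) :
    lipC n r f ≤ c :=
  csInf_le ⟨0, fun _ hc => hc.1⟩ ⟨hc, hf⟩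

lemma norm_le_Wnorm (f : Seg n r) : ‖f‖ ≤ Wnorm n r f := le_max_left _ _

lemma lipC_le_Wnorm (f : Seg n r) : lipC n r f ≤ Wnorm n r f := le_max_right _ _

lemma Wnorm_nonneg (f : Seg n r) : 0 ≤ Wnorm n r f := (norm_nonneg f).trans (norm_le_Wnorm f)

lemma Wnorm_le {f : Seg n r} {c : ℝ} (hc : 0 ≤ c) (hnorm : ‖f‖ ≤ c)
    (hf : LipschitzWith c.toNNReal f) : Wnorm n r f ≤ c :=
  max_le hnorm (lipC_le hc hf)

lemma lipschitzWith_lipC {f : Seg n r} (hf : IsLip n r f) :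
    LipschitzWith (lipC n r f).toNNReal f := by
  obtain ⟨K, hK⟩ := hf
  refine LipschitzWith.of_dist_le_mul fun x y => ?_
  rw [Real.coe_toNNReal _ (lipC_nonneg f)]
  rcases (dist_nonneg (x := x) (y := y)).eq_or_lt with hxy | hxy
  · simp [dist_eq_zero.mp hxy.symm]
  · rw [← div_le_iff₀ hxy]
    refine le_csInf ⟨K, K.coe_nonneg, by rwa [Real.toNNReal_coe]⟩ fun c hc => ?_
    rw [div_le_iff₀ hxy]
    simpa [Real.coe_toNNReal _ hc.1] using hc.2.dist_le_mul x y

lemma lipschitzWith_of_Wnorm_le {f : Seg n r} {c : ℝ} (hf : IsLip n r f)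
    (hc : Wnorm n r f ≤ c) : LipschitzWith c.toNNReal f :=
  (lipschitzWith_lipC hf).weaken (Real.toNNReal_le_toNNReal ((lipC_le_Wnorm f).trans hc))

lemma IsLip.sub {f g : Seg n r} (hf : IsLip n r f) (hg : IsLip n r g) : IsLip n r (f - g) :=
  let ⟨_, hKf⟩ := hf; let ⟨_, hKg⟩ := hg; ⟨_, hKf.sub hKg⟩

lemma lipC_add_le {f g : Seg n r} (hf : IsLip n r f) (hg : IsLip n r g) :
    lipC n r (f + g) ≤ lipC n r f + lipC n r g := by
  refine lipC_le (add_nonneg (lipC_nonneg f) (lipC_nonneg g)) ?_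
  rw [Real.toNNReal_add (lipC_nonneg f) (lipC_nonneg g)]
  exact (lipschitzWith_lipC hf).add (lipschitzWith_lipC hg)

theorem exists_tendsto_Wnorm_of_cauchy {g : ℕ → Seg n r} (hg : ∀ k, IsLip n r (g k))
    (hcauchy : ∀ ε > 0, ∃ N, ∀ k ≥ N, ∀ j ≥ N, Wnorm n r (g k - g j) ≤ ε) :
    ∃ w, IsLip n r w ∧ Tendsto (fun k => Wnorm n r (g k - w)) atTop (𝓝 0) := by
  have hcs : CauchySeq g := by
    refine Metric.cauchySeq_iff.mpr fun ε hε => ?_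
    obtain ⟨N, hN⟩ := hcauchy (ε / 2) (half_pos hε)
    exact ⟨N, fun k hk j hj => by
      rw [dist_eq_norm]; linarith [norm_le_Wnorm (g k - g j), hN k hk j hj]⟩
  obtain ⟨w, hw⟩ := cauchySeq_tendsto_of_complete hcs
  -- every estimate `Wnorm (g k - g j) ≤ ε` survives the pointwise limit `j → ∞`
  have hlim : ∀ ε > 0, ∃ N, ∀ k ≥ N, ‖g k - w‖ ≤ ε ∧ LipschitzWith ε.toNNReal (g k - w) := by
    intro ε hε
    obtain ⟨N, hN⟩ := hcauchy ε hε
    refine ⟨N, fun k hk => ⟨?_, ?_⟩⟩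
    · refine le_of_tendsto ((tendsto_const_nhds.sub hw).norm) ?_
      filter_upwards [eventually_ge_atTop N] with j hj
      exact (norm_le_Wnorm _).trans (hN k hk j hj)
    · refine LipschitzWith.of_dist_le_mul fun x y => ?_
      have hpt : ∀ x, Tendsto (fun j => (g k - g j) x) atTop (𝓝 ((g k - w) x)) := fun x =>
        (continuous_eval_const x).continuousAt.tendsto.comp
          (tendsto_const_nhds.sub hw)
      refine le_of_tendsto ((hpt x).dist (hpt y)) ?_
      filter_upwards [eventually_ge_atTop N] with j hj
      exact (lipschitzWith_of_Wnorm_le ((hg k).sub (hg j)) (hN k hk j hj)).dist_le_mul x y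
  obtain ⟨N, hN⟩ := hlim 1 one_pos
  refine ⟨w, by simpa using (hg N).sub ⟨_, (hN N le_rfl).2⟩, ?_⟩
  refine Metric.tendsto_atTop.mpr fun ε hε => ?_
  obtain ⟨N', hN'⟩ := hlim (ε / 2) (half_pos hε)
  refine ⟨N', fun k hk => ?_⟩
  obtain ⟨hnorm, hlip⟩ := hN' k hk
  rw [Real.dist_0_eq_abs, abs_of_nonneg (Wnorm_nonneg _)]
  exact (Wnorm_le (half_pos hε).le hnorm hlip).trans_lt (half_lt_self hε)

end LipschitzSeminorm

section WCompact

variable {n : ℕ} {r : ℝ} {Ω : Type*} [MetricSpace Ω] {K : Set (Ω × Seg n r)}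

lemma WCompact.isCompact (hK : WCompact n r K) : IsCompact K := by
  refine IsSeqCompact.isCompact fun f hf => ?_
  obtain ⟨φ, hφ, q, hq, hlim⟩ := hK f hf
  refine ⟨q, hq, φ, hφ, tendsto_iff_dist_tendsto_zero.mpr ?_⟩
  refine squeeze_zero (fun _ => dist_nonneg) (fun k => ?_) hlim
  simp only [Function.comp_apply, Prod.dist_eq, dist_eq_norm (f (φ k)).2]
  exact max_le (le_add_of_nonneg_right (Wnorm_nonneg _))
    (le_add_of_nonneg_left dist_nonneg |>.trans' (norm_le_Wnorm _))

lemma WCompact.exists_lipschitzWith (hK : WCompact n r K) (hKlip : ∀ q ∈ K, IsLip n r q.2) :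
    ∃ Λ : ℝ≥0, ∀ q ∈ K, LipschitzWith Λ q.2 := by
  suffices h : ∃ Λ : ℝ, ∀ q ∈ K, lipC n r q.2 ≤ Λ by
    obtain ⟨Λ, hΛ⟩ := h
    exact ⟨Λ.toNNReal, fun q hq =>
      (lipschitzWith_lipC (hKlip q hq)).weaken (Real.toNNReal_le_toNNReal (hΛ q hq))⟩
  by_contra! hunb
  choose q hqK hq using fun k : ℕ => hunb k
  obtain ⟨φ, hφ, q', hq'K, hlim⟩ := hK q hqK
  have hW : ∀ᶠ k in atTop, Wnorm n r ((q (φ k)).2 - q'.2) < 1 :=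
    (squeeze_zero (fun _ => Wnorm_nonneg _) (fun _ => le_add_of_nonneg_left dist_nonneg)
      hlim).eventually_lt_const one_pos
  obtain ⟨k, hk1, hk2⟩ := (hW.and (eventually_ge_atTop ⌈lipC n r q'.2 + 1⌉₊)).exists
  have htri : lipC n r (q (φ k)).2 ≤ lipC n r ((q (φ k)).2 - q'.2) + lipC n r q'.2 := by
    simpa using lipC_add_le ((hKlip _ (hqK (φ k))).sub (hKlip _ hq'K)) (hKlip _ hq'K)
  have hφk : (k : ℝ) ≤ φ k := Nat.cast_le.mpr (hφ.id_le k)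
  linarith [hq (φ k), lipC_le_Wnorm ((q (φ k)).2 - q'.2), Nat.le_ceil (lipC n r q'.2 + 1),
    (Nat.cast_le (α := ℝ)).mpr hk2]

end WCompact

section Clamp

variable {n : ℕ} {r : ℝ}

lemma clamp_eq_comp_projIcc (hr : 0 < r) (x : Seg n r) :
    clamp n r hr x = x ∘ Set.projIcc (-r) 0 (neg_nonpos.mpr hr.le) := by
  funext s
  simp only [clamp, Function.comp_apply, Set.projIcc, min_comm]

lemma clamp_coe (hr : 0 < r) (x : Seg n r) (s : Set.Icc (-r) (0 : ℝ)) :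
    clamp n r hr x s = x s := by
  rw [clamp_eq_comp_projIcc, Function.comp_apply, Set.projIcc_val]

lemma clamp_sub (hr : 0 < r) (x y : Seg n r) (s : ℝ) :
    clamp n r hr (x - y) s = clamp n r hr x s - clamp n r hr y s := rfl

lemma norm_clamp_le (hr : 0 < r) (x : Seg n r) (s : ℝ) : ‖clamp n r hr x s‖ ≤ ‖x‖ :=
  x.norm_coe_le_norm _

lemma continuous_clamp (hr : 0 < r) (x : Seg n r) : Continuous (clamp n r hr x) := by
  rw [clamp_eq_comp_projIcc]
  exact x.continuous.comp continuous_projIcc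

lemma LipschitzWith.clamp (hr : 0 < r) {x : Seg n r} {L : ℝ≥0} (hx : LipschitzWith L x) :
    LipschitzWith L (clamp n r hr x) := by
  rw [clamp_eq_comp_projIcc]
  simpa using hx.comp (LipschitzWith.projIcc (neg_nonpos.mpr hr.le))

lemma Continuous.clamp_snd {α : Type*} [TopologicalSpace α] (hr : 0 < r) {c : α × Seg n r → ℝ}
    (hc : Continuous c) : Continuous fun q => clamp n r hr q.2 (c q) := by
  simp only [clamp_eq_comp_projIcc, Function.comp_apply]
  exact continuous_eval.comp (continuous_snd.prodMk
    ((continuous_projIcc (h := neg_nonpos.mpr hr.le)).comp hc))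

end Clamp

section MeanValue

variable {E : Type*} [NormedAddCommGroup E] [NormedSpace ℝ E]

lemma norm_sub_le_of_hasDerivAt_Ioc {z z' : ℝ → E} {a b C : ℝ} (hab : a ≤ b)
    (hz : ContinuousOn z (Set.Icc a b)) (hderiv : ∀ t ∈ Set.Ioc a b, HasDerivAt z (z' t) t)
    (hbound : ∀ t ∈ Set.Ioc a b, ‖z' t‖ ≤ C) : ‖z b - z a‖ ≤ C * (b - a) := by
  -- reflect `t ↦ -t` to get right derivatives on `[-b, -a)`
  have hrefl := norm_image_sub_le_of_norm_deriv_right_le_segment (a := -b) (b := -a)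
    (f := fun t => z (-t)) (f' := fun t => -z' (-t))
    (hz.comp continuous_neg.continuousOn fun t ht => ⟨le_neg.mp ht.2, neg_le.mp ht.1⟩)
    (fun t ht => ((hderiv (-t) ⟨lt_neg.mp ht.2, neg_le.mp ht.1⟩).scomp t
      (hasDerivAt_neg t)).hasDerivWithinAt.congr_deriv (by simp))
    (fun t ht => by simpa using hbound (-t) ⟨lt_neg.mp ht.2, neg_le.mp ht.1⟩)
    (-a) ⟨neg_le_neg hab, le_rfl⟩
  simpa [norm_sub_rev, neg_add_eq_sub] using hrefl

lemma lipschitzOnWith_of_hasDerivAt_Ioc {z z' : ℝ → E} {a b : ℝ} {C : ℝ≥0}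
    (hz : ContinuousOn z (Set.Icc a b)) (hderiv : ∀ t ∈ Set.Ioc a b, HasDerivAt z (z' t) t)
    (hbound : ∀ t ∈ Set.Ioc a b, ‖z' t‖ ≤ C) : LipschitzOnWith C z (Set.Icc a b) := by
  have hle : ∀ s ∈ Set.Icc a b, ∀ t ∈ Set.Icc a b, s ≤ t → ‖z t - z s‖ ≤ C * (t - s) :=
    fun s hs t ht hst => norm_sub_le_of_hasDerivAt_Ioc hst
      (hz.mono (Set.Icc_subset_Icc hs.1 ht.2))
      (fun x hx => hderiv x ⟨hs.1.trans_lt hx.1, hx.2.trans ht.2⟩)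
      (fun x hx => hbound x ⟨hs.1.trans_lt hx.1, hx.2.trans ht.2⟩)
  refine LipschitzOnWith.of_dist_le_mul fun s hs t ht => ?_
  rw [dist_eq_norm, Real.dist_eq]
  rcases le_total s t with hst | hts
  · rw [norm_sub_rev, abs_of_nonpos (sub_nonpos.mpr hst), neg_sub]
    exact hle s hs t ht hst
  · rw [abs_of_nonneg (sub_nonneg.mpr hts)]
    exact hle t ht s hs hts

end MeanValue

section DelayGronwall

variable {E : Type*} [NormedAddCommGroup E] [NormedSpace ℝ E] {z z' : ℝ → E} {C : ℝ}

lemma norm_le_two_mul_of_delay_step (hz : Continuous z) (hC : 0 ≤ C) {A a b : ℝ} (hab : a ≤ b)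
    (hstep : C * (b - a) ≤ 1 / 2) (hpast : ∀ s ≤ a, ‖z s‖ ≤ A)
    (hderiv : ∀ t ∈ Set.Ioc a b, HasDerivAt z (z' t) t)
    (hbound : ∀ t ∈ Set.Ioc a b, ∀ D, (∀ s ≤ t, ‖z s‖ ≤ D) → ‖z' t‖ ≤ C * D) :
    ∀ s ≤ b, ‖z s‖ ≤ 2 * A := by
  obtain ⟨t₀, ht₀, hmax⟩ :=
    isCompact_Icc.exists_isMaxOn (Set.nonempty_Icc.mpr hab) hz.norm.continuousOn
  set D := max A ‖z t₀‖
  have hA : 0 ≤ A := (norm_nonneg _).trans (hpast a le_rfl)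
  have hD : ∀ s ≤ b, ‖z s‖ ≤ D := fun s hs => by
    rcases le_or_gt s a with hsa | has
    · exact (hpast s hsa).trans (le_max_left _ _)
    · exact (hmax ⟨has.le, hs⟩).trans (le_max_right _ _)
  have hgrowth : ‖z t₀ - z a‖ ≤ C * D * (t₀ - a) :=
    norm_sub_le_of_hasDerivAt_Ioc ht₀.1 hz.continuousOn
      (fun t ht => hderiv t ⟨ht.1, ht.2.trans ht₀.2⟩)
      (fun t ht => hbound t ⟨ht.1, ht.2.trans ht₀.2⟩ D fun s hs =>
        hD s (hs.trans (ht.2.trans ht₀.2)))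
  have hD0 : 0 ≤ D := hA.trans (le_max_left _ _)
  -- a bound `D` on `(-∞, b]` improves itself to `A + D / 2`, since `C (b - a) ≤ 1 / 2`
  have hzt₀ : ‖z t₀‖ ≤ A + D / 2 :=
    calc ‖z t₀‖ ≤ ‖z a‖ + ‖z t₀ - z a‖ := norm_le_norm_add_norm_sub' _ _
      _ ≤ A + D * (C * (b - a)) := by
        gcongr
        · exact hpast a le_rfl
        · nlinarith [mul_nonneg hC hD0, ht₀.2]
      _ ≤ A + D / 2 := by nlinarith
  have hD2 : D ≤ 2 * A := max_le (by linarith) (by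
    rcases le_total ‖z t₀‖ A with h | h
    · linarith
    · have : D = ‖z t₀‖ := max_eq_right h
      linarith)
  exact fun s hs => (hD s hs).trans hD2

lemma norm_le_two_pow_mul_of_delay (hz : Continuous z) (hC : 0 ≤ C) {A : ℝ}
    (hpast : ∀ s ≤ 0, ‖z s‖ ≤ A) (hderiv : ∀ t > 0, HasDerivAt z (z' t) t)
    (hbound : ∀ t > 0, ∀ D, (∀ s ≤ t, ‖z s‖ ≤ D) → ‖z' t‖ ≤ C * D) (k : ℕ) :
    ∀ s ≤ k / (2 * C + 1), ‖z s‖ ≤ 2 ^ k * A := by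
  have hC1 : 0 < 2 * C + 1 := by linarith
  induction k with
  | zero => simpa using hpast
  | succ k ih =>
    have hk : (0 : ℝ) ≤ k / (2 * C + 1) := by positivity
    have hstep : C * ((k + 1 : ℕ) / (2 * C + 1) - k / (2 * C + 1)) ≤ 1 / 2 := by
      rw [← sub_div, Nat.cast_succ, add_sub_cancel_left, mul_one_div, div_le_div_iff₀ hC1 two_pos]
      linarith
    intro s hs
    rw [pow_succ, mul_comm _ 2, mul_assoc]
    exact norm_le_two_mul_of_delay_step hz hC
      (div_le_div_of_nonneg_right (by simp) hC1.le) hstep ih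
      (fun t ht => hderiv t (hk.trans_lt ht.1)) (fun t ht => hbound t (hk.trans_lt ht.1)) s hs

end DelayGronwall

theorem exists_cauchySeq_subseq_of_lipschitzWith {X E : Type*} [MetricSpace X] [CompactSpace X]
    [NormedAddCommGroup E] [ProperSpace E] (f : ℕ → C(X, E)) {L : ℝ≥0} {B : ℝ}
    (hL : ∀ m, LipschitzWith L (f m)) (hB : ∀ m x, ‖f m x‖ ≤ B) :
    ∃ φ : ℕ → ℕ, StrictMono φ ∧ CauchySeq (f ∘ φ) := by
  let e := ContinuousMap.isometryEquivBoundedOfCompact X E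
  have hA : IsCompact (closure (Set.range (e ∘ f))) := by
    refine BoundedContinuousFunction.arzela_ascoli (Metric.closedBall 0 B)
      (isCompact_closedBall 0 B) _ ?_ ?_
    · rintro _ x ⟨m, rfl⟩
      exact mem_closedBall_zero_iff.mpr (hB m x)
    · refine (LipschitzWith.uniformEquicontinuous _ L ?_).equicontinuous
      rintro ⟨_, m, rfl⟩
      exact hL m
  obtain ⟨_, _, φ, hφ, hlim⟩ := hA.tendsto_subseq fun m => subset_closure ⟨m, rfl⟩
  exact ⟨φ, hφ, e.symm.isometry.uniformContinuous.comp_cauchySeq hlim.cauchySeq⟩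

/-- `Z v` solves `ż(t) = L t z_t` for `t > 0` with initial segment `v`, and `P t v = z_t`. -/
structure IsDelaySolution (n : ℕ) (r : ℝ) (hr : 0 < r) (L : ℝ → Seg n r →L[ℝ] Evec n)
    (P : ℝ → Seg n r →L[ℝ] Seg n r) (Z : Seg n r → ℝ → Evec n) : Prop where
  initial : ∀ v s, s ≤ 0 → Z v s = clamp n r hr v s
  hasDerivAt : ∀ v t, 0 < t → HasDerivAt (Z v) (L t (P t v)) t
  segment : ∀ v t, 0 ≤ t → ∀ s, -r ≤ s → s ≤ 0 → clamp n r hr (P t v) s = Z v (t + s)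

namespace IsDelaySolution

variable {n : ℕ} {r : ℝ} {hr : 0 < r} {L : ℝ → Seg n r →L[ℝ] Evec n}
  {P : ℝ → Seg n r →L[ℝ] Seg n r} {Z : Seg n r → ℝ → Evec n} {C : ℝ}

lemma segment_apply (h : IsDelaySolution n r hr L P Z) (v : Seg n r) {t : ℝ} (ht : 0 ≤ t)
    (s : Set.Icc (-r) (0 : ℝ)) : P t v s = Z v (t + s) := by
  rw [← clamp_coe hr, h.segment v t ht s s.2.1 s.2.2]

lemma continuous (h : IsDelaySolution n r hr L P Z) (v : Seg n r) : Continuous (Z v) := by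
  refine continuous_iff_continuousAt.mpr fun a => ?_
  rcases lt_or_ge a 0 with ha | ha
  · refine (continuous_clamp hr v).continuousAt.congr ?_
    filter_upwards [Iio_mem_nhds ha] with s hs
    exact (h.initial v s hs.le).symm
  · -- near `a ≥ 0`, `Z v` is read off the segment at time `a + r / 2`
    have hcont := (continuous_clamp hr (P (a + r / 2) v)).comp
      (continuous_sub_right (a + r / 2))
    refine hcont.continuousAt.congr ?_
    filter_upwards [Ioo_mem_nhds (by linarith : a + r / 2 - r < a)
      (by linarith : a < a + r / 2)] with s hs
    simpa using h.segment v (a + r / 2) (by positivity) (s - (a + r / 2))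
      (by linarith [hs.1]) (by linarith [hs.2])

lemma sub_apply (h : IsDelaySolution n r hr L P Z) (v w : Seg n r) (s : ℝ) :
    Z (v - w) s = Z v s - Z w s := by
  rcases le_or_gt s 0 with hs | hs
  · simp only [h.initial _ s hs, clamp_sub]
  · have hseg := fun u => h.segment u s hs.le 0 (by linarith) le_rfl
    simp only [add_zero] at hseg
    rw [← hseg, ← hseg, ← hseg, map_sub, clamp_sub]

lemma norm_segment_le (h : IsDelaySolution n r hr L P Z) (v : Seg n r) {t D : ℝ} (ht : 0 ≤ t)
    (hD : 0 ≤ D) (hZ : ∀ s ∈ Set.Icc (t - r) t, ‖Z v s‖ ≤ D) : ‖P t v‖ ≤ D :=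
  (ContinuousMap.norm_le _ hD).mpr fun s => by
    rw [h.segment_apply v ht s]
    exact hZ _ ⟨by linarith [s.2.1], by linarith [s.2.2]⟩

lemma norm_deriv_le (h : IsDelaySolution n r hr L P Z) (hC : 0 ≤ C)
    (hL : ∀ t > 0, ∀ ψ, ‖L t ψ‖ ≤ C * ‖ψ‖) (v : Seg n r) {t D : ℝ} (ht : 0 < t)
    (hZ : ∀ s ∈ Set.Icc (t - r) t, ‖Z v s‖ ≤ D) : ‖L t (P t v)‖ ≤ C * D :=
  (hL t ht _).trans <| mul_le_mul_of_nonneg_left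
    (h.norm_segment_le v ht.le ((norm_nonneg _).trans (hZ t ⟨by linarith, le_rfl⟩)) hZ) hC

lemma norm_le_two_pow_mul (h : IsDelaySolution n r hr L P Z) (hC : 0 ≤ C)
    (hL : ∀ t > 0, ∀ ψ, ‖L t ψ‖ ≤ C * ‖ψ‖) {v : Seg n r} {M : ℝ} (hv : ‖v‖ ≤ M) (k : ℕ) :
    ∀ s ≤ k / (2 * C + 1), ‖Z v s‖ ≤ 2 ^ k * M :=
  norm_le_two_pow_mul_of_delay (h.continuous v) hC
    (fun s hs => by rw [h.initial v s hs]; exact (norm_clamp_le hr v s).trans hv)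
    (h.hasDerivAt v) (fun t ht D hD => h.norm_deriv_le hC hL v ht fun s hs => hD s hs.2) k

lemma lipschitzOnWith (h : IsDelaySolution n r hr L P Z) (hC : 0 ≤ C)
    (hL : ∀ t > 0, ∀ ψ, ‖L t ψ‖ ≤ C * ‖ψ‖) (v : Seg n r) {a b D : ℝ} (ha : 0 ≤ a)
    (hZ : ∀ s ∈ Set.Icc (a - r) b, ‖Z v s‖ ≤ D) :
    LipschitzOnWith (C * D).toNNReal (Z v) (Set.Icc a b) := by
  refine lipschitzOnWith_of_hasDerivAt_Ioc (h.continuous v).continuousOn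
    (fun t ht => h.hasDerivAt v t (ha.trans_lt ht.1)) fun t ht => ?_
  refine (h.norm_deriv_le hC hL v (ha.trans_lt ht.1) fun s hs =>
    hZ s ⟨by linarith [hs.1, ht.1], hs.2.trans ht.2⟩).trans (Real.le_coe_toNNReal _)

lemma Wnorm_segment_le (h : IsDelaySolution n r hr L P Z) (hC : 0 ≤ C)
    (hL : ∀ t > 0, ∀ ψ, ‖L t ψ‖ ≤ C * ‖ψ‖) (v : Seg n r) {t D : ℝ} (ht : r ≤ t) (hD : 0 ≤ D)
    (hZ : ∀ s ∈ Set.Icc (t - 2 * r) t, ‖Z v s‖ ≤ D) :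
    IsLip n r (P t v) ∧ Wnorm n r (P t v) ≤ (1 + C) * D := by
  have ht0 : 0 ≤ t := hr.le.trans ht
  have hlipZ := h.lipschitzOnWith hC hL v (sub_nonneg.mpr ht) (b := t) (D := D) fun s hs =>
    hZ s ⟨by linarith [hs.1], hs.2⟩
  have hlip : LipschitzWith (C * D).toNNReal (P t v) := LipschitzWith.of_dist_le_mul fun x y => by
    rw [h.segment_apply v ht0, h.segment_apply v ht0, Subtype.dist_eq,
      ← dist_add_left t (x : ℝ) y]
    exact hlipZ.dist_le_mul _ ⟨by linarith [x.2.1], by linarith [x.2.2]⟩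
      _ ⟨by linarith [y.2.1], by linarith [y.2.2]⟩
  refine ⟨⟨_, hlip⟩, Wnorm_le (by positivity) ?_ (hlip.weaken ?_)⟩
  · exact (h.norm_segment_le v ht0 hD fun s hs => hZ s ⟨by linarith [hs.1], hs.2⟩).trans
      (le_mul_of_one_le_left hD (by linarith))
  · exact Real.toNNReal_le_toNNReal (by nlinarith)

end IsDelaySolution

namespace IsDelaySolution

variable {n : ℕ} {r : ℝ} {hr : 0 < r} {L : ℝ → Seg n r →L[ℝ] Evec n}
  {P : ℝ → Seg n r →L[ℝ] Seg n r} {Z : Seg n r → ℝ → Evec n} {C : ℝ}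

theorem exists_subseq_tendsto_Wnorm (h : IsDelaySolution n r hr L P Z) (hC : 0 ≤ C)
    (hL : ∀ t > 0, ∀ ψ, ‖L t ψ‖ ≤ C * ‖ψ‖) {T : ℝ} (hT : 2 * r ≤ T) (v : ℕ → Seg n r)
    {M : ℝ} (hv : ∀ m, ‖v m‖ ≤ M) :
    ∃ φ : ℕ → ℕ, StrictMono φ ∧ ∃ w : Seg n r, IsLip n r w ∧
      Tendsto (fun k => Wnorm n r (P T (v (φ k)) - w)) atTop (𝓝 0) := by
  have hT0 : 0 ≤ T := by linarith
  set B := 2 ^ ⌈(2 * C + 1) * T⌉₊ * M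
  have hB0 : 0 ≤ B := by have := (norm_nonneg _).trans (hv 0); positivity
  have hB : ∀ m, ∀ s ≤ T, ‖Z (v m) s‖ ≤ B := fun m s hs =>
    h.norm_le_two_pow_mul hC hL (hv m) _ s <| hs.trans <|
      (le_div_iff₀' (by linarith)).mpr (Nat.le_ceil _)
  let f : ℕ → C(Set.Icc 0 T, Evec n) := fun m =>
    ⟨fun s => Z (v m) s, (h.continuous (v m)).comp continuous_subtype_val⟩
  obtain ⟨φ, hφ, hcauchy⟩ := exists_cauchySeq_subseq_of_lipschitzWith f (B := B)
    (fun m => (h.lipschitzOnWith hC hL (v m) le_rfl fun s hs => hB m s hs.2).to_restrict)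
    (fun m s => hB m s s.2.2)
  refine ⟨φ, hφ, exists_tendsto_Wnorm_of_cauchy (g := fun k => P T (v (φ k)))
    (fun k => (h.Wnorm_segment_le hC hL _ (by linarith) hB0 fun s hs => hB _ s hs.2).1)
    fun ε hε => ?_⟩
  obtain ⟨N, hN⟩ := Metric.cauchySeq_iff.mp hcauchy (ε / (1 + C)) (by positivity)
  refine ⟨N, fun k hk j hj => ?_⟩
  -- the segments at time `T` only see the solutions on `[T - 2r, T] ⊆ [0, T]`
  have hdiff : ∀ s ∈ Set.Icc (T - 2 * r) T, ‖Z (v (φ k) - v (φ j)) s‖ ≤ ε / (1 + C) :=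
    fun s hs => by
      rw [h.sub_apply, ← dist_eq_norm]
      exact (ContinuousMap.dist_apply_le_dist (f := f (φ k)) (g := f (φ j))
        ⟨s, by linarith [hs.1], hs.2⟩).trans (hN k hk j hj).le
  rw [← map_sub]
  calc Wnorm n r (P T (v (φ k) - v (φ j))) ≤ (1 + C) * (ε / (1 + C)) :=
        (h.Wnorm_segment_le hC hL _ (by linarith) (by positivity) hdiff).2
    _ = ε := mul_div_cancel₀ ε (by positivity)

end IsDelaySolution

lemma HasFDerivAt.eq_zero_of_forall_mem_Icc {E : Type*} [NormedAddCommGroup E]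
    [NormedSpace ℝ E] {f : E → ℝ} {f' : E →L[ℝ] ℝ} {x : E} {a b : ℝ} (hf : HasFDerivAt f f' x)
    (hab : ∀ y, f y ∈ Set.Icc a b) (hx : f x ∉ Set.Ioo a b) : f' = 0 := by
  rcases (hab x).1.eq_or_lt with ha | ha
  · exact IsLocalMin.hasFDerivAt_eq_zero (Eventually.of_forall fun y => ha ▸ (hab y).1) hf
  · have hb : f x = b := (hab x).2.eq_or_lt.resolve_right fun hb => hx ⟨ha, hb⟩
    exact IsLocalMax.hasFDerivAt_eq_zero (Eventually.of_forall fun y => hb ▸ (hab y).2) hf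

lemma norm_add_sub_smul_le {E F G : Type*} [NormedAddCommGroup E] [NormedSpace ℝ E]
    [NormedAddCommGroup F] [NormedSpace ℝ F] [NormedAddCommGroup G] [NormedSpace ℝ G]
    (A B : E →L[ℝ] F) (ℓ : G →L[ℝ] ℝ) (a b d : E) (ψ : G) :
    ‖A a + B b - ℓ ψ • B d‖ ≤ ‖A‖ * ‖a‖ + ‖B‖ * ‖b‖ + ‖ψ‖ * ‖B‖ * (‖ℓ‖ * ‖d‖) := by
  calc ‖A a + B b - ℓ ψ • B d‖ ≤ ‖A a‖ + ‖B b‖ + ‖ℓ ψ‖ * ‖B d‖ := by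
        grw [norm_sub_le, norm_add_le, norm_smul]
    _ ≤ ‖A‖ * ‖a‖ + ‖B‖ * ‖b‖ + (‖ℓ‖ * ‖ψ‖) * (‖B‖ * ‖d‖) := by
        gcongr <;> exact ContinuousLinearMap.le_opNorm _ _
    _ = _ := by ring

theorem exists_norm_linearization_le {n : ℕ} {r : ℝ} (hr : 0 < r) {Ω : Type*}
    [TopologicalSpace Ω] {K : Set (Ω × Seg n r)} (hK : IsCompact K) {Λ : ℝ≥0}
    (hΛ : ∀ q ∈ K, LipschitzWith Λ q.2) (D2F D3F : Ω → Evec n → Evec n → (Evec n →L[ℝ] Evec n))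
    (hD2Fc : Continuous fun p : Ω × Evec n × Evec n => D2F p.1 p.2.1 p.2.2)
    (hD3Fc : Continuous fun p : Ω × Evec n × Evec n => D3F p.1 p.2.1 p.2.2)
    (τ : Ω → Seg n r → ℝ) (hτmem : ∀ ω x, τ ω x ∈ Set.Icc (0:ℝ) r)
    (hτc : Continuous fun p : Ω × Seg n r => τ p.1 p.2)
    (D2τ : Ω → Seg n r → (Seg n r →L[ℝ] ℝ)) (hD2τ : ∀ ω x, HasFDerivAt (τ ω) (D2τ ω x) x)
    (hD2τc : Continuous fun p : Ω × Seg n r => D2τ p.1 p.2)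
    (Dx : Ω × Seg n r → ℝ → Evec n)
    (hDx : ∀ p ∈ K, ∀ s ∈ Set.Ioo (-r) (0:ℝ), HasDerivAt (clamp n r hr p.2) (Dx p s) s)
    (Lop : Ω × Seg n r → (Seg n r →L[ℝ] Evec n))
    (hLdef : ∀ p ∈ K, ∀ φv : Seg n r, Lop p φv =
      D2F p.1 (clamp n r hr p.2 0) (clamp n r hr p.2 (-(τ p.1 p.2))) (clamp n r hr φv 0)
      + D3F p.1 (clamp n r hr p.2 0) (clamp n r hr p.2 (-(τ p.1 p.2)))
          (clamp n r hr φv (-(τ p.1 p.2)))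
      - (D2τ p.1 p.2 φv) •
          D3F p.1 (clamp n r hr p.2 0) (clamp n r hr p.2 (-(τ p.1 p.2)))
            (Dx p (-(τ p.1 p.2)))) :
    ∃ C, 0 ≤ C ∧ ∀ q ∈ K, ∀ ψ, ‖Lop q ψ‖ ≤ C * ‖ψ‖ := by
  have htriple : Continuous fun q : Ω × Seg n r =>
      (q.1, clamp n r hr q.2 0, clamp n r hr q.2 (-(τ q.1 q.2))) :=
    continuous_fst.prodMk ((continuous_const.clamp_snd hr).prodMk (hτc.neg.clamp_snd hr))
  obtain ⟨C₂, hC₂⟩ := hK.exists_bound_of_continuousOn (hD2Fc.comp htriple).continuousOn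
  obtain ⟨C₃, hC₃⟩ := hK.exists_bound_of_continuousOn (hD3Fc.comp htriple).continuousOn
  obtain ⟨Cτ, hCτ⟩ :=
    hK.exists_bound_of_continuousOn (f := fun q : Ω × Seg n r => D2τ q.1 q.2) hD2τc.continuousOn
  -- `Dx` is only evaluated where `D2τ` can be nonzero, i.e. where `τ` lies strictly inside `(0, r)`
  have hDx_le : ∀ q ∈ K, ‖D2τ q.1 q.2‖ * ‖Dx q (-(τ q.1 q.2))‖ ≤ ‖D2τ q.1 q.2‖ * Λ := by
    intro q hq
    by_cases hτ : τ q.1 q.2 ∈ Set.Ioo 0 r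
    · gcongr
      exact (hDx q hq _ ⟨neg_lt_neg hτ.2, neg_neg_of_pos hτ.1⟩).le_of_lipschitz
        ((hΛ q hq).clamp hr)
    · rw [(hD2τ q.1 q.2).eq_zero_of_forall_mem_Icc (hτmem q.1) hτ, ContinuousLinearMap.opNorm_zero]
      simp
  refine ⟨max C₂ 0 + max C₃ 0 + max C₃ 0 * (max Cτ 0 * Λ), by positivity, fun q hq ψ => ?_⟩
  rw [hLdef q hq ψ]
  refine (norm_add_sub_smul_le _ _ _ _ _ _ ψ).trans ?_
  have h₂ := (hC₂ q hq).trans (le_max_left _ 0)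
  have h₃ := (hC₃ q hq).trans (le_max_left _ 0)
  have hτ' : ‖D2τ q.1 q.2‖ * ‖Dx q (-(τ q.1 q.2))‖ ≤ max Cτ 0 * Λ :=
    (hDx_le q hq).trans (by gcongr; exact (hCτ q hq).trans (le_max_left _ 0))
  have ha := norm_clamp_le hr ψ 0
  have hb := norm_clamp_le hr ψ (-(τ q.1 q.2))
  simp only [Function.comp_apply] at h₂ h₃
  calc _ ≤ max C₂ 0 * ‖ψ‖ + max C₃ 0 * ‖ψ‖ + ‖ψ‖ * max C₃ 0 * (max Cτ 0 * Λ) := by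
        gcongr
    _ = _ := by ring

theorem stmt10_general (n : ℕ) (r : ℝ) (hr : 0 < r)
    -- the base flow on a compact metric space
    (Ω : Type) [MetricSpace Ω]
    (σ : ℝ → Ω → Ω)
    -- the vector field F, hypothesis H1
    (D2F D3F : Ω → Evec n → Evec n → (Evec n →L[ℝ] Evec n))
    (hD2Fc : Continuous fun p : Ω × Evec n × Evec n => D2F p.1 p.2.1 p.2.2)
    (hD3Fc : Continuous fun p : Ω × Evec n × Evec n => D3F p.1 p.2.1 p.2.2)
    -- the state-dependent delay τ, hypothesis H2(1)
    (τ : Ω → Seg n r → ℝ)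
    (hτmem : ∀ ω x, τ ω x ∈ Set.Icc (0:ℝ) r)
    (hτc : Continuous fun p : Ω × Seg n r => τ p.1 p.2)
    (D2τ : Ω → Seg n r → (Seg n r →L[ℝ] ℝ))
    (hD2τ : ∀ ω x, HasFDerivAt (τ ω) (D2τ ω x) x)
    (hD2τc : Continuous fun p : Ω × Seg n r => D2τ p.1 p.2)
    -- the (unique) maximal solutions y(·,ω,x) with maximal time β(ω,x), and the
    -- induced skew-product semiflow Π(t,ω,x) = (σ t ω, u t ω x) of solution segments
    (β : Ω → Seg n r → ℝ≥0∞)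
    (u : ℝ → Ω → Seg n r → Seg n r)
    -- a positively invariant compact subset of Ω × W^{1,∞} whose points all admit
    -- backward extension in K
    (K : Set (Ω × Seg n r))
    (hKlip : ∀ p ∈ K, IsLip n r p.2)
    (hKcpt : WCompact n r K)
    (hKinv : PosInv n r σ u β K)
    -- the linearized operator L along K, defined from D2F, D3F, D2τ and the
    -- derivative Dx of the (C¹) segments of the points of K
    (Dx : Ω × Seg n r → ℝ → Evec n)
    (hDx : ∀ p ∈ K, ∀ s ∈ Set.Ioo (-r) (0:ℝ), HasDerivAt (clamp n r hr p.2) (Dx p s) s)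
    (Lop : Ω × Seg n r → (Seg n r →L[ℝ] Evec n))
    (hLdef : ∀ p ∈ K, ∀ φv : Seg n r, Lop p φv =
      D2F p.1 (clamp n r hr p.2 0) (clamp n r hr p.2 (-(τ p.1 p.2))) (clamp n r hr φv 0)
      + D3F p.1 (clamp n r hr p.2 0) (clamp n r hr p.2 (-(τ p.1 p.2)))
          (clamp n r hr φv (-(τ p.1 p.2)))
      - (D2τ p.1 p.2 φv) •
          D3F p.1 (clamp n r hr p.2 0) (clamp n r hr p.2 (-(τ p.1 p.2)))
            (Dx p (-(τ p.1 p.2))))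
    -- the solutions z(·,p,v) of the variational equation ż = L(Π(t,p))z_t and the
    -- induced linear skew-product cocycle P(t,p) of solution segments
    (P : ℝ → Ω × Seg n r → (Seg n r →L[ℝ] Seg n r))
    (Z : Ω × Seg n r → Seg n r → ℝ → Evec n)
    (hZ0 : ∀ p v, ∀ s : ℝ, s ≤ 0 → Z p v s = clamp n r hr v s)
    (hZode : ∀ p ∈ K, ∀ v : Seg n r, ∀ t : ℝ, 0 < t →
      HasDerivAt (Z p v) (Lop (σ t p.1, u t p.1 p.2) (P t p v)) t)
    (hPseg : ∀ p v, ∀ t : ℝ, 0 ≤ t → ∀ s : ℝ, -r ≤ s → s ≤ 0 →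
      clamp n r hr (P t p v) s = Z p v (t + s))
    (T : ℝ) (hT : 2 * r ≤ T) :
    (∀ p ∈ K, ∀ (v : ℕ → Seg n r) (M : ℝ), (∀ m, ‖v m‖ ≤ M) →
      ∃ φ : ℕ → ℕ, StrictMono φ ∧ ∃ w : Seg n r, IsLip n r w ∧
        Tendsto (fun k => Wnorm n r (P T p (v (φ k)) - w)) atTop (nhds 0)) ∧
    (∀ p ∈ K, ∀ (v : ℕ → Seg n r) (M : ℝ),
      (∀ m, IsLip n r (v m) ∧ Wnorm n r (v m) ≤ M) →
      ∃ φ : ℕ → ℕ, StrictMono φ ∧ ∃ w : Seg n r, IsLip n r w ∧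
        Tendsto (fun k => Wnorm n r (P T p (v (φ k)) - w)) atTop (nhds 0)) := by
  obtain ⟨Λ, hΛ⟩ := hKcpt.exists_lipschitzWith hKlip
  obtain ⟨C, hC, hLop⟩ := exists_norm_linearization_le hr hKcpt.isCompact hΛ D2F D3F hD2Fc
    hD3Fc τ hτmem hτc D2τ hD2τ hD2τc Dx hDx Lop hLdef
  have hcompact : ∀ p ∈ K, ∀ (v : ℕ → Seg n r) (M : ℝ), (∀ m, ‖v m‖ ≤ M) →
      ∃ φ : ℕ → ℕ, StrictMono φ ∧ ∃ w : Seg n r, IsLip n r w ∧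
        Tendsto (fun k => Wnorm n r (P T p (v (φ k)) - w)) atTop (nhds 0) :=
    fun p hp v _ hv =>
      IsDelaySolution.exists_subseq_tendsto_Wnorm (L := fun t => Lop (σ t p.1, u t p.1 p.2))
        ⟨hZ0 p, hZode p hp, hPseg p⟩ hC (fun t ht => hLop _ ((hKinv p hp).2 t ht.le)) hT v hv
  exact ⟨hcompact, fun p hp v M hv =>
    hcompact p hp v M fun m => (norm_le_Wnorm (v m)).trans (hv m).2⟩

/-- For `T ≥ 2r` the operator `π̂_L(T,ω,x̄) : C → W^{1,∞}` is compact,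
and consequently so is `π_L(T,ω,x̄) : W^{1,∞} → W^{1,∞}` (compactness expressed by:
bounded sequences have subsequences whose images converge in the `W^{1,∞}` norm). -/
theorem stmt10 (n : ℕ) (r : ℝ) (hr : 0 < r)
    -- the base flow on a compact metric space
    (Ω : Type) [MetricSpace Ω] [CompactSpace Ω]
    (σ : ℝ → Ω → Ω)
    (hσc : Continuous fun p : ℝ × Ω => σ p.1 p.2)
    (hσ0 : ∀ ω, σ 0 ω = ω)
    (hσadd : ∀ t s : ℝ, ∀ ω, σ (t + s) ω = σ t (σ s ω))
    -- the vector field F, hypothesis H1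
    (F : Ω → Evec n → Evec n → Evec n)
    (hFc : Continuous fun p : Ω × Evec n × Evec n => F p.1 p.2.1 p.2.2)
    (D2F D3F : Ω → Evec n → Evec n → (Evec n →L[ℝ] Evec n))
    (hD2F : ∀ ω a b, HasFDerivAt (fun y => F ω y b) (D2F ω a b) a)
    (hD3F : ∀ ω a b, HasFDerivAt (fun y => F ω a y) (D3F ω a b) b)
    (hD2Fc : Continuous fun p : Ω × Evec n × Evec n => D2F p.1 p.2.1 p.2.2)
    (hD3Fc : Continuous fun p : Ω × Evec n × Evec n => D3F p.1 p.2.1 p.2.2)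
    -- the state-dependent delay τ, hypothesis H2(1)
    (τ : Ω → Seg n r → ℝ)
    (hτmem : ∀ ω x, τ ω x ∈ Set.Icc (0:ℝ) r)
    (hτc : Continuous fun p : Ω × Seg n r => τ p.1 p.2)
    (D2τ : Ω → Seg n r → (Seg n r →L[ℝ] ℝ))
    (hD2τ : ∀ ω x, HasFDerivAt (τ ω) (D2τ ω x) x)
    (hD2τc : Continuous fun p : Ω × Seg n r => D2τ p.1 p.2)
    -- the (unique) maximal solutions y(·,ω,x) with maximal time β(ω,x), and the
    -- induced skew-product semiflow Π(t,ω,x) = (σ t ω, u t ω x) of solution segments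
    (β : Ω → Seg n r → ℝ≥0∞)
    (hβpos : ∀ ω x, 0 < β ω x)
    (u : ℝ → Ω → Seg n r → Seg n r)
    (Y : Ω → Seg n r → ℝ → Evec n)
    (hY0 : ∀ ω x, ∀ s : ℝ, s ≤ 0 → Y ω x s = clamp n r hr x s)
    (hYode : ∀ ω x, ∀ t : ℝ, 0 < t → ENNReal.ofReal t < β ω x →
      HasDerivAt (Y ω x) (F (σ t ω) (Y ω x t) (Y ω x (t - τ (σ t ω) (u t ω x)))) t)
    (hu : ∀ ω x, ∀ t : ℝ, 0 ≤ t → ENNReal.ofReal t < β ω x →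
      ∀ s : ℝ, -r ≤ s → s ≤ 0 → clamp n r hr (u t ω x) s = Y ω x (t + s))
    (hcoc : ∀ ω x, ∀ t s : ℝ, 0 ≤ t → 0 ≤ s → ENNReal.ofReal (t + s) < β ω x →
      u (t + s) ω x = u t (σ s ω) (u s ω x))
    (hmax : ∀ ω x,
      (∃ M : ℝ, ∀ t : ℝ, 0 ≤ t → ENNReal.ofReal t < β ω x → ‖u t ω x‖ ≤ M) →
      β ω x = ⊤)
    -- a positively invariant compact subset of Ω × W^{1,∞} whose points all admit
    -- backward extension in K
    (K : Set (Ω × Seg n r))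
    (hKlip : ∀ p ∈ K, IsLip n r p.2)
    (hKcpt : WCompact n r K)
    (hKinv : PosInv n r σ u β K)
    (hKback : ∀ p ∈ K, HasBack n r σ u K p)
    -- the linearized operator L along K, defined from D2F, D3F, D2τ and the
    -- derivative Dx of the (C¹) segments of the points of K
    (Dx : Ω × Seg n r → ℝ → Evec n)
    (hDx : ∀ p ∈ K, ∀ s ∈ Set.Ioo (-r) (0:ℝ), HasDerivAt (clamp n r hr p.2) (Dx p s) s)
    (Lop : Ω × Seg n r → (Seg n r →L[ℝ] Evec n))
    (hLdef : ∀ p ∈ K, ∀ φv : Seg n r, Lop p φv =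
      D2F p.1 (clamp n r hr p.2 0) (clamp n r hr p.2 (-(τ p.1 p.2))) (clamp n r hr φv 0)
      + D3F p.1 (clamp n r hr p.2 0) (clamp n r hr p.2 (-(τ p.1 p.2)))
          (clamp n r hr φv (-(τ p.1 p.2)))
      - (D2τ p.1 p.2 φv) •
          D3F p.1 (clamp n r hr p.2 0) (clamp n r hr p.2 (-(τ p.1 p.2)))
            (Dx p (-(τ p.1 p.2))))
    -- the solutions z(·,p,v) of the variational equation ż = L(Π(t,p))z_t and the
    -- induced linear skew-product cocycle P(t,p) of solution segments
    (P : ℝ → Ω × Seg n r → (Seg n r →L[ℝ] Seg n r))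
    (Z : Ω × Seg n r → Seg n r → ℝ → Evec n)
    (hZ0 : ∀ p v, ∀ s : ℝ, s ≤ 0 → Z p v s = clamp n r hr v s)
    (hZode : ∀ p ∈ K, ∀ v : Seg n r, ∀ t : ℝ, 0 < t →
      HasDerivAt (Z p v) (Lop (σ t p.1, u t p.1 p.2) (P t p v)) t)
    (hPseg : ∀ p v, ∀ t : ℝ, 0 ≤ t → ∀ s : ℝ, -r ≤ s → s ≤ 0 →
      clamp n r hr (P t p v) s = Z p v (t + s))
    (T : ℝ) (hT : 2 * r ≤ T) :
    (∀ p ∈ K, ∀ (v : ℕ → Seg n r) (M : ℝ), (∀ m, ‖v m‖ ≤ M) →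
      ∃ φ : ℕ → ℕ, StrictMono φ ∧ ∃ w : Seg n r, IsLip n r w ∧
        Tendsto (fun k => Wnorm n r (P T p (v (φ k)) - w)) atTop (nhds 0)) ∧
    (∀ p ∈ K, ∀ (v : ℕ → Seg n r) (M : ℝ),
      (∀ m, IsLip n r (v m) ∧ Wnorm n r (v m) ≤ M) →
      ∃ φ : ℕ → ℕ, StrictMono φ ∧ ∃ w : Seg n r, IsLip n r w ∧
        Tendsto (fun k => Wnorm n r (P T p (v (φ k)) - w)) atTop (nhds 0)) :=
  stmt10_general n r hr Ω σ D2F D3F hD2Fc hD3Fc τ hτmem hτc D2τ hD2τ hD2τc β u K hKlip hKcpt hKinv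
    Dx hDx Lop hLdef P Z hZ0 hZode hPseg T hT
end
end
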